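/- Let a > b > 0 and r = a*b/(a+b). For any triangle P₁P₂P₃ with all vertices on the ellipse x²/a² + y²/b² = 1, whose three side lines each have distance exactly r from the origin, and whose interior contains the origin, the cosine of each interior angle lies in the closed interval [1 − 2*a²/(a+b)², 1 − 2*b²/(a+b)²]. -/

import Mathlib

/-!
At a vertex `p` the two sides are tangent to the circle of radius `r`, so the interior angle is
the angle `θ` between the two tangents from `p`, with `sin (θ / 2) = r / ‖p‖`; hence
`cos θ = 1 - 2 r² / ‖p‖²`. In the plane this comes from the identity
`‖p‖² ⟪u, v⟫ = ⟪p, u⟫ ⟪p, v⟫ + ω p u ω p v` (`ω` the area form) for the side directions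
`u`, `v`: tangency gives `(ω p u)² = r² ‖u‖²` and `⟪p, u⟫² = (‖p‖² - r²) ‖u‖²`, and the origin
lying in the triangle fixes the signs of the two products. A point of the ellipse has
`b ≤ ‖p‖ ≤ a`, and `r = ab / (a + b)` turns this into the stated bounds.
-/

open EuclideanGeometry
open scoped RealInnerProductSpace

section InnerProductSpace

variable {E : Type*} [NormedAddCommGroup E] [InnerProductSpace ℝ E]

theorem exists_smul_sub_add_smul_sub_eq_neg_of_zero_mem_convexHull {p q s : E}
    (h : (0 : E) ∈ convexHull ℝ {p, q, s}) :
    ∃ α β : ℝ, 0 ≤ α ∧ 0 ≤ β ∧ α • (q - p) + β • (s - p) = -p := by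
  rw [convexHull_insert (Set.insert_nonempty _ _), mem_convexJoin] at h
  obtain ⟨_, rfl, z, hz, c, t, -, ht, hct, hcz⟩ := h
  rw [convexHull_pair] at hz
  obtain ⟨α, β, hα, hβ, hαβ, rfl⟩ := hz
  refine ⟨t * α, t * β, mul_nonneg ht hα, mul_nonneg ht hβ, ?_⟩
  obtain rfl : c = 1 - t := by linarith
  obtain rfl : β = 1 - α := by linarith
  rw [← sub_eq_zero, ← hcz]
  module

theorem infDist_affineSpan_pair_sq_mul (x p q : E) :
    Metric.infDist x (line[ℝ, p, q] : Set E) ^ 2 * ‖q - p‖ ^ 2 =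
      ‖x - p‖ ^ 2 * ‖q - p‖ ^ 2 - ⟪x - p, q - p⟫ ^ 2 := by
  have hdir : q - p ∈ line[ℝ, p, q].direction :=
    AffineSubspace.vsub_mem_direction (right_mem_affineSpan_pair ℝ p q)
      (left_mem_affineSpan_pair ℝ p q)
  have hperp := Submodule.inner_right_of_mem_orthogonal hdir
    (vsub_orthogonalProjection_mem_direction_orthogonal _ x)
  have hf := AffineSubspace.vsub_mem_direction (orthogonalProjection_mem x)
    (left_mem_affineSpan_pair ℝ p q)
  rw [← dist_orthogonalProjection_eq_infDist, dist_eq_norm]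
  generalize (orthogonalProjection line[ℝ, p, q] x : E) = f at hf hperp ⊢
  rw [direction_affineSpan, vectorSpan_pair_rev, Submodule.mem_span_singleton] at hf
  obtain ⟨t, ht⟩ := hf
  rw [vsub_eq_sub, vsub_eq_sub] at ht
  rw [vsub_eq_sub, real_inner_comm] at hperp
  rw [show x - p = (x - f) + t • (q - p) by rw [ht]; abel]
  simp only [← real_inner_self_eq_norm_sq, inner_add_left, inner_add_right, real_inner_smul_left,
    real_inner_smul_right, hperp, real_inner_comm (x - f)]
  ring

end InnerProductSpace

section TwoDim

variable {E : Type*} [NormedAddCommGroup E] [InnerProductSpace ℝ E] [Fact (Module.finrank ℝ E = 2)]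

attribute [local instance] FiniteDimensional.of_fact_finrank_eq_two

theorem Orientation.areaForm_mul_areaForm_eq_of_smul_add_smul_eq_neg (o : Orientation ℝ E (Fin 2))
    {p u v : E} {α β : ℝ} (h : α • u + β • v = -p) :
    o.areaForm p u * o.areaForm p v = -(α * β * o.areaForm u v ^ 2) := by
  rw [← neg_neg p, ← h]
  simp only [map_neg, map_add, map_smul, LinearMap.neg_apply, LinearMap.add_apply,
    LinearMap.smul_apply, smul_eq_mul, o.areaForm_apply_self, o.areaForm_swap v u]
  ring

theorem inner_mul_norm_sq_eq_of_smul_add_smul_eq_neg {p u v : E} {r α β : ℝ} (hr : 0 < r)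
    (hu : u ≠ 0) (hv : v ≠ 0)
    (hpu : ⟪p, u⟫ ^ 2 + r ^ 2 * ‖u‖ ^ 2 = ‖p‖ ^ 2 * ‖u‖ ^ 2)
    (hpv : ⟪p, v⟫ ^ 2 + r ^ 2 * ‖v‖ ^ 2 = ‖p‖ ^ 2 * ‖v‖ ^ 2)
    (hα : 0 ≤ α) (hβ : 0 ≤ β) (h : α • u + β • v = -p) :
    ⟪u, v⟫ * ‖p‖ ^ 2 = (‖p‖ ^ 2 - 2 * r ^ 2) * (‖u‖ * ‖v‖) := by
  let o : Orientation ℝ E (Fin 2) := (Module.finBasisOfFinrankEq ℝ E Fact.out).orientation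
  have hωu : o.areaForm p u ^ 2 = r ^ 2 * ‖u‖ ^ 2 := by linarith [o.inner_sq_add_areaForm_sq p u]
  have hωv : o.areaForm p v ^ 2 = r ^ 2 * ‖v‖ ^ 2 := by linarith [o.inner_sq_add_areaForm_sq p v]
  have huv := o.areaForm_mul_areaForm_eq_of_smul_add_smul_eq_neg h
  have hcross : o.areaForm p u * o.areaForm p v = -(r ^ 2 * (‖u‖ * ‖v‖)) := by
    have hsq : (o.areaForm p u * o.areaForm p v) ^ 2 = (r ^ 2 * (‖u‖ * ‖v‖)) ^ 2 := by
      rw [mul_pow, hωu, hωv]; ring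
    refine (sq_eq_sq_iff_eq_or_eq_neg.mp hsq).resolve_left fun hpos ↦ ?_
    have : 0 < r ^ 2 * (‖u‖ * ‖v‖) := by positivity
    nlinarith [sq_nonneg (o.areaForm u v), mul_nonneg hα hβ]
  have hdot : ⟪p, u⟫ * ⟪p, v⟫ = (‖p‖ ^ 2 - r ^ 2) * (‖u‖ * ‖v‖) ∨
      ⟪p, u⟫ * ⟪p, v⟫ = -((‖p‖ ^ 2 - r ^ 2) * (‖u‖ * ‖v‖)) := by
    refine sq_eq_sq_iff_eq_or_eq_neg.mp ?_
    linear_combination ⟪p, v⟫ ^ 2 * hpu + (‖p‖ ^ 2 - r ^ 2) * ‖u‖ ^ 2 * hpv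
  have hid := o.inner_mul_inner_add_areaForm_mul_areaForm p u v
  rcases hdot with hdot | hdot
  · linear_combination hdot + hcross - hid
  -- this sign would make `u` and `v` antiparallel, but `ω u v ≠ 0`
  · have hωuv : o.areaForm u v ≠ 0 := fun h0 ↦ by
      have : 0 < r ^ 2 * (‖u‖ * ‖v‖) := by positivity
      rw [h0] at huv
      linarith
    have hstrict : ⟪u, v⟫ ^ 2 < (‖u‖ * ‖v‖) ^ 2 := by
      have := o.inner_sq_add_areaForm_sq u v
      have := pow_pos (abs_pos.mpr hωuv) 2
      rw [sq_abs] at this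
      nlinarith
    have hp : 0 < ‖p‖ ^ 2 := by
      have : 0 < r ^ 2 * ‖u‖ ^ 2 := by positivity
      nlinarith [sq_nonneg ⟪p, u⟫, sq_nonneg ‖u‖]
    have : ⟪u, v⟫ = -(‖u‖ * ‖v‖) :=
      mul_right_cancel₀ hp.ne' (by linear_combination hdot + hcross - hid)
    rw [this, neg_sq] at hstrict
    exact absurd hstrict (lt_irrefl _)

theorem cos_angle_eq_of_infDist_affineSpan_pair_eq {p q s : E} {r : ℝ} (hr : 0 < r)
    (hq : q ≠ p) (hs : s ≠ p)
    (hpq : Metric.infDist 0 (line[ℝ, p, q] : Set E) = r)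
    (hps : Metric.infDist 0 (line[ℝ, p, s] : Set E) = r)
    (h0 : (0 : E) ∈ convexHull ℝ {p, q, s}) :
    Real.cos (∠ q p s) = 1 - 2 * r ^ 2 / ‖p‖ ^ 2 := by
  have hside : ∀ x, Metric.infDist 0 (line[ℝ, p, x] : Set E) = r →
      ⟪p, x - p⟫ ^ 2 + r ^ 2 * ‖x - p‖ ^ 2 = ‖p‖ ^ 2 * ‖x - p‖ ^ 2 := fun x hx ↦ by
    have := infDist_affineSpan_pair_sq_mul 0 p x
    rw [hx, zero_sub, norm_neg, inner_neg_left, neg_sq] at this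
    linarith
  have hp : r ≤ ‖p‖ := by
    simpa [← hpq] using Metric.infDist_le_dist_of_mem (x := 0) (left_mem_affineSpan_pair ℝ p q)
  obtain ⟨α, β, hα, hβ, h⟩ := exists_smul_sub_add_smul_sub_eq_neg_of_zero_mem_convexHull h0
  have key := inner_mul_norm_sq_eq_of_smul_add_smul_eq_neg hr (sub_ne_zero.mpr hq)
    (sub_ne_zero.mpr hs) (hside q hpq) (hside s hps) hα hβ h
  rw [EuclideanGeometry.angle, InnerProductGeometry.cos_angle, vsub_eq_sub, vsub_eq_sub]
  have : 0 < ‖q - p‖ := norm_pos_iff.mpr (sub_ne_zero.mpr hq)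
  have : 0 < ‖s - p‖ := norm_pos_iff.mpr (sub_ne_zero.mpr hs)
  have : 0 < ‖p‖ := hr.trans_le hp
  field_simp
  linear_combination key

end TwoDim

theorem sq_add_sq_mem_Icc_of_ellipse {a b x y : ℝ} (hb : 0 < b) (hab : b ≤ a)
    (h : x ^ 2 / a ^ 2 + y ^ 2 / b ^ 2 = 1) :
    x ^ 2 + y ^ 2 ∈ Set.Icc (b ^ 2) (a ^ 2) := by
  have ha : 0 < a := hb.trans_le hab
  have hab2 : b ^ 2 ≤ a ^ 2 := pow_le_pow_left₀ hb.le hab 2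
  field_simp at h
  constructor
  · nlinarith [mul_nonneg (sq_nonneg x) (sub_nonneg.mpr hab2)]
  · nlinarith [mul_nonneg (sq_nonneg y) (sub_nonneg.mpr hab2), pow_pos hb 2]

theorem one_sub_two_mul_sq_div_mem_Icc {a b d : ℝ} (hb : 0 < b) (hab : b ≤ a)
    (hd : d ∈ Set.Icc (b ^ 2) (a ^ 2)) :
    1 - 2 * (a * b / (a + b)) ^ 2 / d ∈
      Set.Icc (1 - 2 * a ^ 2 / (a + b) ^ 2) (1 - 2 * b ^ 2 / (a + b) ^ 2) := by
  have ha : 0 < a := hb.trans_le hab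
  have hd0 : 0 < d := by nlinarith [hd.1]
  have hlow : 2 * (a * b / (a + b)) ^ 2 / d = 2 * a ^ 2 / (a + b) ^ 2 * (b ^ 2 / d) := by field_simp
  have hupp : 2 * (a * b / (a + b)) ^ 2 / d = 2 * b ^ 2 / (a + b) ^ 2 * (a ^ 2 / d) := by field_simp
  constructor
  · rw [hlow]
    gcongr
    exact mul_le_of_le_one_right (by positivity) ((div_le_one hd0).mpr hd.1)
  · rw [hupp]
    gcongr
    exact le_mul_of_one_le_right (by positivity) ((one_le_div hd0).mpr hd.2)

open scoped EuclideanSpace in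
theorem cos_angle_mem_Icc_of_ellipse {a b r : ℝ} (hb : 0 < b) (hab : b ≤ a)
    (hr : r = a * b / (a + b)) {P Q R : EuclideanSpace ℝ (Fin 2)} (hQ : Q ≠ P) (hR : R ≠ P)
    (hE : (P 0) ^ 2 / a ^ 2 + (P 1) ^ 2 / b ^ 2 = 1)
    (hdQ : Metric.infDist 0 (line[ℝ, P, Q] : Set (EuclideanSpace ℝ (Fin 2))) = r)
    (hdR : Metric.infDist 0 (line[ℝ, P, R] : Set (EuclideanSpace ℝ (Fin 2))) = r)
    (h0 : (0 : EuclideanSpace ℝ (Fin 2)) ∈ convexHull ℝ {P, Q, R}) :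
    Real.cos (∠ Q P R) ∈
      Set.Icc (1 - 2 * a ^ 2 / (a + b) ^ 2) (1 - 2 * b ^ 2 / (a + b) ^ 2) := by
  have hr0 : 0 < r := by rw [hr]; have := hb.trans_le hab; positivity
  rw [cos_angle_eq_of_infDist_affineSpan_pair_eq hr0 hQ hR hdQ hdR h0, hr,
    EuclideanSpace.real_norm_sq_eq, Fin.sum_univ_two]
  exact one_sub_two_mul_sq_div_mem_Icc hb hab (sq_add_sq_mem_Icc_of_ellipse hb hab hE)

theorem incircle_family_cosine_bounds (a b : ℝ) (hb : 0 < b) (hab : b < a)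
    (r : ℝ) (hr : r = a * b / (a + b))
    (P₁ P₂ P₃ : EuclideanSpace ℝ (Fin 2))
    (hind : AffineIndependent ℝ ![P₁, P₂, P₃])
    (hE₁ : (P₁ 0) ^ 2 / a ^ 2 + (P₁ 1) ^ 2 / b ^ 2 = 1)
    (hE₂ : (P₂ 0) ^ 2 / a ^ 2 + (P₂ 1) ^ 2 / b ^ 2 = 1)
    (hE₃ : (P₃ 0) ^ 2 / a ^ 2 + (P₃ 1) ^ 2 / b ^ 2 = 1)
    (hd₁ : Metric.infDist 0 (affineSpan ℝ {P₁, P₂} : Set (EuclideanSpace ℝ (Fin 2))) = r)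
    (hd₂ : Metric.infDist 0 (affineSpan ℝ {P₂, P₃} : Set (EuclideanSpace ℝ (Fin 2))) = r)
    (hd₃ : Metric.infDist 0 (affineSpan ℝ {P₃, P₁} : Set (EuclideanSpace ℝ (Fin 2))) = r)
    (h0 : (0 : EuclideanSpace ℝ (Fin 2)) ∈
      interior (convexHull ℝ ({P₁, P₂, P₃} : Set (EuclideanSpace ℝ (Fin 2))))) :
    Real.cos (∠ P₂ P₁ P₃) ∈
      Set.Icc (1 - 2 * a ^ 2 / (a + b) ^ 2) (1 - 2 * b ^ 2 / (a + b) ^ 2) ∧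
    Real.cos (∠ P₁ P₂ P₃) ∈
      Set.Icc (1 - 2 * a ^ 2 / (a + b) ^ 2) (1 - 2 * b ^ 2 / (a + b) ^ 2) ∧
    Real.cos (∠ P₁ P₃ P₂) ∈
      Set.Icc (1 - 2 * a ^ 2 / (a + b) ^ 2) (1 - 2 * b ^ 2 / (a + b) ^ 2) := by
  have h12 : P₁ ≠ P₂ := hind.injective.ne (by decide : (0 : Fin 3) ≠ 1)
  have h23 : P₂ ≠ P₃ := hind.injective.ne (by decide : (1 : Fin 3) ≠ 2)
  have h31 : P₃ ≠ P₁ := hind.injective.ne (by decide : (2 : Fin 3) ≠ 0)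
  have h0 := interior_subset h0
  refine ⟨?_, ?_, ?_⟩
  · exact cos_angle_mem_Icc_of_ellipse hb hab.le hr h12.symm h31 hE₁ hd₁ (by rwa [Set.pair_comm]) h0
  · exact cos_angle_mem_Icc_of_ellipse hb hab.le hr h12 h23.symm hE₂ (by rwa [Set.pair_comm]) hd₂
      (Set.insert_comm P₁ P₂ {P₃} ▸ h0)
  · exact cos_angle_mem_Icc_of_ellipse hb hab.le hr h31.symm h23 hE₃ hd₃ (by rwa [Set.pair_comm])
      (by rwa [Set.insert_comm P₃ P₁, Set.pair_comm P₃ P₂])
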